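/- arXiv:math/0509182 — 4 statements merged into one kernel-verified Lean document; each statement's English description precedes it below -/
import Mathlib

section
/- Let P = {P_i : i ∈ I} and Q = {Q_i : i ∈ I} be families of pairwise orthogonal projections summing to the identity on H₁ and H₂ respectively, and for each i let X_i be a subspace of Q_i B(H₁,H₂) P_i which is 1-hyperreflexive. Then the subspace X = {T : Q_i T P_i ∈ X_i for all i} is 1-hyperreflexive. -/
noncomputable def opdist {H₁ H₂ : Type*} [NormedAddCommGroup H₁] [InnerProductSpace ℂ H₁]
    [NormedAddCommGroup H₂] [InnerProductSpace ℂ H₂]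
    (T : H₁ →L[ℂ] H₂) (S : Submodule ℂ (H₁ →L[ℂ] H₂)) : ℝ :=
  Metric.infDist T (S : Set (H₁ →L[ℂ] H₂))

noncomputable def beta {H₁ H₂ : Type*} [NormedAddCommGroup H₁] [InnerProductSpace ℂ H₁]
    [NormedAddCommGroup H₂] [InnerProductSpace ℂ H₂]
    (S : Submodule ℂ (H₁ →L[ℂ] H₂)) (T : H₁ →L[ℂ] H₂) : ℝ :=
  ⨆ x : {x : H₁ // ‖x‖ = 1},
    Metric.infDist (T x.1)
      (closure ((fun A : H₁ →L[ℂ] H₂ => A x.1) '' (S : Set (H₁ →L[ℂ] H₂))))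

/-- A subspace of operators is `1`-hyperreflexive if `dist(T,S) = β_S(T)` for all `T`. -/
def OneHyperreflexive {H₁ H₂ : Type*} [NormedAddCommGroup H₁] [InnerProductSpace ℂ H₁]
    [NormedAddCommGroup H₂] [InnerProductSpace ℂ H₂]
    (S : Submodule ℂ (H₁ →L[ℂ] H₂)) : Prop :=
  ∀ T : H₁ →L[ℂ] H₂, opdist T S = beta S T

/-- Compression of an operator to `B(K, L)`, `T ↦ Q_L T|_K`, as a linear map. -/
noncomputable def compressL {H₁ H₂ : Type*} [NormedAddCommGroup H₁] [InnerProductSpace ℂ H₁]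
    [NormedAddCommGroup H₂] [InnerProductSpace ℂ H₂]
    (K : Submodule ℂ H₁) (L : Submodule ℂ H₂) [CompleteSpace L] :
    (H₁ →L[ℂ] H₂) →ₗ[ℂ] (K →L[ℂ] L) where
  toFun T := (L.orthogonalProjection).comp (T.comp K.subtypeL)
  map_add' T U := by ext x; simp
  map_smul' c T := by ext x; simp


open Metric DirectSum

private lemma le_infDist_of_forall {α : Type*} [PseudoMetricSpace α] {t : Set α} {b : α} {c : ℝ}
    (ht : t.Nonempty) (h : ∀ y ∈ t, c ≤ dist b y) : c ≤ infDist b t := by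
  by_contra hc
  push_neg at hc
  obtain ⟨y, hy, hlt⟩ := (infDist_lt_iff ht).mp hc
  exact absurd (h y hy) (not_le.mpr hlt)

private lemma term_le_opdist {H₁ H₂ : Type*} [NormedAddCommGroup H₁] [InnerProductSpace ℂ H₁]
    [NormedAddCommGroup H₂] [InnerProductSpace ℂ H₂]
    (S : Submodule ℂ (H₁ →L[ℂ] H₂)) (T : H₁ →L[ℂ] H₂) (x : H₁) (hx : ‖x‖ = 1) :
    Metric.infDist (T x) (closure ((fun A : H₁ →L[ℂ] H₂ => A x) '' (S : Set (H₁ →L[ℂ] H₂))))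
      ≤ opdist T S := by
  rw [Metric.infDist_closure]
  apply le_infDist_of_forall ⟨0, S.zero_mem⟩
  intro B hB
  refine le_trans (infDist_le_dist_of_mem (Set.mem_image_of_mem _ hB)) ?_
  rw [dist_eq_norm, dist_eq_norm]
  calc ‖T x - B x‖ = ‖(T - B) x‖ := by simp
    _ ≤ ‖T - B‖ * ‖x‖ := (T - B).le_opNorm x
    _ = ‖T - B‖ := by rw [hx, mul_one]

private lemma beta_le_opdist {H₁ H₂ : Type*} [NormedAddCommGroup H₁] [InnerProductSpace ℂ H₁]
    [NormedAddCommGroup H₂] [InnerProductSpace ℂ H₂]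
    (S : Submodule ℂ (H₁ →L[ℂ] H₂)) (T : H₁ →L[ℂ] H₂) :
    beta S T ≤ opdist T S :=
  Real.iSup_le (fun x => term_le_opdist S T x.1 x.2) infDist_nonneg

private lemma compress_term_le {H₁ H₂ : Type*}
    [NormedAddCommGroup H₁] [InnerProductSpace ℂ H₁]
    [NormedAddCommGroup H₂] [InnerProductSpace ℂ H₂]
    {ι : Type*} (K : ι → Submodule ℂ H₁) (L : ι → Submodule ℂ H₂)
    [∀ i, CompleteSpace (L i)]
    (X : ∀ i, Submodule ℂ ((K i) →L[ℂ] (L i))) (i : ι) (x : K i) (T : H₁ →L[ℂ] H₂) :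
    Metric.infDist ((compressL (K i) (L i) T) x)
        (closure ((fun A : (K i) →L[ℂ] (L i) => A x) '' ((X i) : Set _)))
      ≤ Metric.infDist (T ↑x)
        (closure ((fun A : H₁ →L[ℂ] H₂ => A ↑x) ''
          (((⨅ j, (X j).comap (compressL (K j) (L j)) : Submodule ℂ (H₁ →L[ℂ] H₂))) : Set (H₁ →L[ℂ] H₂)))) := by
  rw [Metric.infDist_closure, Metric.infDist_closure]
  apply le_infDist_of_forall
    ⟨_, Set.mem_image_of_mem _ (Submodule.zero_mem (⨅ j, (X j).comap (compressL (K j) (L j))))⟩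
  rintro y ⟨B, hB, rfl⟩
  have hBi : compressL (K i) (L i) B ∈ X i := by
    have := (Submodule.mem_iInf _).mp hB i
    exact Submodule.mem_comap.mp this
  refine le_trans (Metric.infDist_le_dist_of_mem
    (Set.mem_image_of_mem _ (by exact hBi : compressL (K i) (L i) B ∈ ((X i) : Set _)))) ?_
  rw [dist_eq_norm, dist_eq_norm]
  have h1 : (compressL (K i) (L i) T) x - (compressL (K i) (L i) B) x
      = (L i).orthogonalProjection (T ↑x - B ↑x) := by
    simp [compressL, map_sub]
  calc ‖(compressL (K i) (L i) T) x - (compressL (K i) (L i) B) x‖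
      = ‖(L i).orthogonalProjection (T ↑x - B ↑x)‖ := by rw [h1]
    _ ≤ ‖((L i).orthogonalProjection : H₂ →L[ℂ] L i)‖ * ‖T ↑x - B ↑x‖ :=
        ((L i).orthogonalProjection).le_opNorm _
    _ ≤ 1 * ‖T ↑x - B ↑x‖ := by
        gcongr; exact Submodule.orthogonalProjectionOnto_norm_le _
    _ = ‖T ↑x - B ↑x‖ := one_mul _

private lemma exists_blockDiag {H₁ H₂ : Type*}
    [NormedAddCommGroup H₁] [InnerProductSpace ℂ H₁] [CompleteSpace H₁]
    [NormedAddCommGroup H₂] [InnerProductSpace ℂ H₂] [CompleteSpace H₂]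
    {ι : Type*} (K : ι → Submodule ℂ H₁) (L : ι → Submodule ℂ H₂)
    [∀ i, CompleteSpace (K i)] [∀ i, CompleteSpace (L i)]
    (hKorth : Pairwise fun i j => K i ≤ (K j)ᗮ)
    (hLorth : Pairwise fun i j => L i ≤ (L j)ᗮ)
    (hKtop : (⨆ i, K i) = ⊤)
    (C : ∀ i, (K i) →L[ℂ] (L i)) {M : ℝ} (hM0 : 0 ≤ M) (hM : ∀ i, ‖C i‖ ≤ M) :
    ∃ D : H₁ →L[ℂ] H₂, ‖D‖ ≤ M ∧ ∀ i, compressL (K i) (L i) D = C i := by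
  classical
  have hKf : OrthogonalFamily ℂ (fun i => K i) (fun i => (K i).subtypeₗᵢ) := by
    intro i j hij v w
    exact (Submodule.mem_orthogonal' (K j) _).mp (hKorth hij v.2) w w.2
  have hLf : OrthogonalFamily ℂ (fun i => L i) (fun i => (L i).subtypeₗᵢ) := by
    intro i j hij v w
    exact (Submodule.mem_orthogonal' (L j) _).mp (hLorth hij v.2) w w.2
  have hint : DirectSum.IsInternal K :=
    DirectSum.isInternal_submodule_of_iSupIndep_of_iSup_eq_top hKf.independent hKtop
  let e : (DirectSum ι fun i => K i) ≃ₗ[ℂ] H₁ := LinearEquiv.ofBijective (DirectSum.coeLinearMap K) hint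
  let φ : ∀ i, (K i) →ₗ[ℂ] H₂ := fun i => (L i).subtype.comp ((C i) : (K i) →ₗ[ℂ] (L i))
  let lm : (DirectSum ι fun i => K i) →ₗ[ℂ] H₂ := DirectSum.toModule ℂ ι H₂ φ
  let Dlin : H₁ →ₗ[ℂ] H₂ := lm.comp (e.symm : H₁ →ₗ[ℂ] DirectSum ι fun i => K i)
  have hbound : ∀ x : H₁, ‖Dlin x‖ ≤ M * ‖x‖ := by
    intro x
    set z : DirectSum ι fun i => K i := e.symm x with hz
    set s : Finset ι := DFinsupp.support z with hs
    have hzsum : ∑ i ∈ s, DirectSum.of (fun i => K i) i (z i) = z := DirectSum.sum_support_of z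
    have hx : x = ∑ i ∈ s, ((z i : H₁)) := by
      have h1 : x = DirectSum.coeLinearMap K z := (e.apply_symm_apply x).symm
      conv_lhs => rw [h1, ← hzsum]
      rw [map_sum]
      exact Finset.sum_congr rfl fun i _ => DirectSum.coeLinearMap_of K i (z i)
    have hDx : Dlin x = ∑ i ∈ s, ((C i (z i) : H₂)) := by
      have h2 : Dlin x = lm z := by rw [hz]; rfl
      conv_lhs => rw [h2, ← hzsum]
      rw [map_sum]
      refine Finset.sum_congr rfl fun i _ => ?_
      rw [← DirectSum.lof_eq_of ℂ, DirectSum.toModule_lof]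
      rfl
    have hxsq : ‖x‖ ^ 2 = ∑ i ∈ s, ‖z i‖ ^ 2 := by
      rw [hx]; exact hKf.norm_sum z s
    have hDsq : ‖Dlin x‖ ^ 2 = ∑ i ∈ s, ‖C i (z i)‖ ^ 2 := by
      rw [hDx]; exact hLf.norm_sum (fun i => C i (z i)) s
    have hle : ‖Dlin x‖ ^ 2 ≤ (M * ‖x‖) ^ 2 := by
      rw [hDsq, mul_pow, hxsq, Finset.mul_sum]
      refine Finset.sum_le_sum fun i _ => ?_
      rw [← mul_pow]
      have h1 : ‖C i (z i)‖ ≤ M * ‖z i‖ :=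
        le_trans ((C i).le_opNorm _) (mul_le_mul_of_nonneg_right (hM i) (norm_nonneg _))
      exact pow_le_pow_left₀ (norm_nonneg _) h1 2
    exact (pow_le_pow_iff_left₀ (norm_nonneg _) (by positivity) two_ne_zero).mp hle
  refine ⟨Dlin.mkContinuous M hbound, LinearMap.mkContinuous_norm_le _ hM0 _, ?_⟩
  intro i
  ext x
  have he : e.symm (↑x : H₁) = DirectSum.of (fun i => K i) i x := by
    apply e.injective
    rw [e.apply_symm_apply]
    exact (DirectSum.coeLinearMap_of K i x).symm
  have hDx : Dlin.mkContinuous M hbound (↑x : H₁) = ((C i x : H₂)) := by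
    show lm (e.symm ↑x) = _
    rw [he, ← DirectSum.lof_eq_of ℂ, DirectSum.toModule_lof]
    rfl
  have hfin : (L i).orthogonalProjection (Dlin.mkContinuous M hbound (↑x : H₁)) = C i x := by
    rw [hDx]
    exact Submodule.orthogonalProjection_mem_subspace_eq_self (C i x)
  exact congrArg Subtype.val hfin

/-- If `{P_i}` and `{Q_i}` are partitions of the identity (given here by pairwise
orthogonal families of closed subspaces `K i ⊆ H₁`, `L i ⊆ H₂` spanning everything)
and each `X_i ⊆ Q_i B(H₁,H₂) P_i` is `1`-hyperreflexive, then
`X = {T : Q_i T P_i ∈ X_i for all i}` is `1`-hyperreflexive. -/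
theorem oneHyperreflexive_of_blocks {H₁ H₂ : Type*}
    [NormedAddCommGroup H₁] [InnerProductSpace ℂ H₁] [CompleteSpace H₁]
    [NormedAddCommGroup H₂] [InnerProductSpace ℂ H₂] [CompleteSpace H₂]
    {ι : Type*} (K : ι → Submodule ℂ H₁) (L : ι → Submodule ℂ H₂)
    [∀ i, CompleteSpace (K i)] [∀ i, CompleteSpace (L i)]
    (hKorth : Pairwise fun i j => K i ≤ (K j)ᗮ)
    (hLorth : Pairwise fun i j => L i ≤ (L j)ᗮ)
    (hKtop : (⨆ i, K i) = ⊤) (hLtop : (⨆ i, L i) = ⊤)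
    (X : ∀ i, Submodule ℂ ((K i) →L[ℂ] (L i)))
    (hX : ∀ i, OneHyperreflexive (X i)) :
    OneHyperreflexive (⨅ i, (X i).comap (compressL (K i) (L i))) := by
  intro T
  set 𝒳 : Submodule ℂ (H₁ →L[ℂ] H₂) := ⨅ i, (X i).comap (compressL (K i) (L i)) with h𝒳
  have easy : beta 𝒳 T ≤ opdist T 𝒳 := beta_le_opdist 𝒳 T
  have hbeta0 : 0 ≤ beta 𝒳 T := Real.iSup_nonneg fun _ => Metric.infDist_nonneg
  -- key inequality : block betas are dominated by beta of 𝒳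
  have key : ∀ i, beta (X i) (compressL (K i) (L i) T) ≤ beta 𝒳 T := by
    intro i
    refine Real.iSup_le (fun x => ?_) hbeta0
    have hxx : ‖((x.1 : K i) : H₁)‖ = 1 := by rw [Submodule.norm_coe]; exact x.2
    have hbdd : BddAbove (Set.range fun y : {x : H₁ // ‖x‖ = 1} =>
        Metric.infDist (T y.1)
          (closure ((fun A : H₁ →L[ℂ] H₂ => A y.1) '' (𝒳 : Set (H₁ →L[ℂ] H₂))))) := by
      refine ⟨opdist T 𝒳, ?_⟩
      rintro _ ⟨y, rfl⟩
      exact term_le_opdist 𝒳 T y.1 y.2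
    refine le_trans (compress_term_le K L X i x.1 T) ?_
    exact le_ciSup hbdd (⟨((x.1 : K i) : H₁), hxx⟩ : {x : H₁ // ‖x‖ = 1})
  refine le_antisymm ?_ easy
  refine le_of_forall_pos_le_add fun ε hε => ?_
  have hlt : ∀ i, Metric.infDist (compressL (K i) (L i) T) ((X i) : Set _) < beta 𝒳 T + ε := by
    intro i
    calc Metric.infDist (compressL (K i) (L i) T) ((X i) : Set _)
        = beta (X i) (compressL (K i) (L i) T) := hX i _
      _ ≤ beta 𝒳 T := key i
      _ < beta 𝒳 T + ε := by linarith
  choose A hA hd using fun i =>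
    (Metric.infDist_lt_iff ⟨0, (X i).zero_mem⟩).mp (hlt i)
  obtain ⟨D, hDnorm, hDcomp⟩ := exists_blockDiag K L hKorth hLorth hKtop
    (fun i => compressL (K i) (L i) T - A i) (M := beta 𝒳 T + ε) (by linarith)
    (fun i => by have := le_of_lt (hd i); exact le_trans (le_of_eq (dist_eq_norm (compressL (K i) (L i) T) (A i)).symm) this)
  have hmem : T - D ∈ 𝒳 := by
    rw [h𝒳, Submodule.mem_iInf]
    intro i
    rw [Submodule.mem_comap, map_sub, hDcomp i]
    simpa using (X i).smul_mem 1 (hA i)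
  calc opdist T 𝒳 ≤ dist T (T - D) := Metric.infDist_le_dist_of_mem hmem
    _ = ‖D‖ := by rw [dist_eq_norm]; simp
    _ ≤ beta 𝒳 T + ε := hDnorm
end

section
/- For r, s ≥ 0 with r + s > 0 and a unitary U = [[α,−β],[β,α]] with 0 < α < (r+s)β, there exist no complex scalars a, b with ‖[[α−a, −β−ra−sb],[β, α−b]]‖ < 1 (operator norm on M₂(ℂ)). -/
/-!
An operator norm below `1 = α² + β²` forces every row and every column of the matrix to have
Euclidean norm below `α² + β²`. Expanding `‖α - z‖² + ‖β + w‖² < α² + β²` gives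
`β Re w < α Re z`; applied to the two columns and two rows this yields `Re a, Re b > 0` and
`β (r Re a + s Re b) < α min (Re a, Re b)`, whence `(r + s) β < α`.
-/

noncomputable def act {n : ℕ} (M : Matrix (Fin n) (Fin n) ℂ) :
    EuclideanSpace ℂ (Fin n) →L[ℂ] EuclideanSpace ℂ (Fin n) :=
  LinearMap.toContinuousLinearMap (Matrix.toEuclideanLin M)

open Matrix
open scoped Matrix.Norms.L2Operator

lemma norm_act_conjTranspose {n : ℕ} (M : Matrix (Fin n) (Fin n) ℂ) :
    ‖act Mᴴ‖ = ‖act M‖ :=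
  Matrix.l2_opNorm_conjTranspose M

lemma sum_norm_sq_col_le_norm_act_sq {n : ℕ} (M : Matrix (Fin n) (Fin n) ℂ) (j : Fin n) :
    ∑ i, ‖M i j‖ ^ 2 ≤ ‖act M‖ ^ 2 := by
  have h := (act M).le_opNorm (PiLp.single 2 j 1)
  have hcol : act M (PiLp.single 2 j 1) = WithLp.toLp 2 (M.col j) := by
    rw [← M.mulVec_single_one]; rfl
  rw [hcol, PiLp.norm_single, norm_one, mul_one] at h
  simpa [EuclideanSpace.norm_sq_eq] using pow_le_pow_left₀ (norm_nonneg _) h 2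

lemma sum_norm_sq_row_le_norm_act_sq {n : ℕ} (M : Matrix (Fin n) (Fin n) ℂ) (i : Fin n) :
    ∑ j, ‖M i j‖ ^ 2 ≤ ‖act M‖ ^ 2 := by
  simpa [norm_act_conjTranspose] using sum_norm_sq_col_le_norm_act_sq Mᴴ i

lemma mul_re_lt_mul_re_of_norm_sq_add_norm_sq_lt (α β : ℝ) (z w : ℂ)
    (h : ‖(α : ℂ) - z‖ ^ 2 + ‖(β : ℂ) + w‖ ^ 2 < α ^ 2 + β ^ 2) :
    β * w.re < α * z.re := by
  simp only [Complex.sq_norm, Complex.normSq_apply, Complex.sub_re, Complex.sub_im,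
    Complex.add_re, Complex.add_im, Complex.ofReal_re, Complex.ofReal_im] at h
  nlinarith [mul_self_nonneg z.re, mul_self_nonneg z.im, mul_self_nonneg w.re, mul_self_nonneg w.im]

lemma add_mul_lt_of_mul_add_mul_lt {r s β α x y : ℝ} (hr : 0 ≤ r) (hs : 0 ≤ s)
    (hβ : 0 ≤ β) (hx : 0 < x) (hy : 0 < y)
    (hltx : β * (r * x + s * y) < α * x) (hlty : β * (r * x + s * y) < α * y) :
    (r + s) * β < α := by
  rcases le_total x y with h | h
  · nlinarith [mul_le_mul_of_nonneg_left h (mul_nonneg hs hβ)]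
  · nlinarith [mul_le_mul_of_nonneg_left h (mul_nonneg hr hβ)]

theorem no_close_approximant_general (r s α β : ℝ) (hr : 0 ≤ r) (hs : 0 ≤ s)
    (hαβ : α ^ 2 + β ^ 2 = 1) (hα : 0 < α)
    (hαlt : α < (r + s) * β) (a b : ℂ) :
    ¬ ‖act !![(α : ℂ) - a, -(β : ℂ) - (r : ℂ) * a - (s : ℂ) * b;
              (β : ℂ), (α : ℂ) - b]‖ < 1 := by
  set M := !![(α : ℂ) - a, -(β : ℂ) - (r : ℂ) * a - (s : ℂ) * b; (β : ℂ), (α : ℂ) - b]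
  intro hM
  have hM2 : ‖act M‖ ^ 2 < α ^ 2 + β ^ 2 := by
    rw [hαβ]; nlinarith [norm_nonneg (act M)]
  have hβ : 0 < β := pos_of_mul_pos_right (hα.trans hαlt) (add_nonneg hr hs)
  have hc : ‖-(β : ℂ) - r * a - s * b‖ = ‖(β : ℂ) + (r * a + s * b)‖ := by
    rw [← norm_neg]; ring_nf
  have entry_bound (z w : ℂ) (h : ‖(α : ℂ) - z‖ ^ 2 + ‖(β : ℂ) + w‖ ^ 2 ≤ ‖act M‖ ^ 2) :
      β * w.re < α * z.re :=
    mul_re_lt_mul_re_of_norm_sq_add_norm_sq_lt α β z w (h.trans_lt hM2)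
  have hcol₀ := sum_norm_sq_col_le_norm_act_sq M 0
  have hcol₁ := sum_norm_sq_col_le_norm_act_sq M 1
  have hrow₀ := sum_norm_sq_row_le_norm_act_sq M 0
  have hrow₁ := sum_norm_sq_row_le_norm_act_sq M 1
  simp only [Fin.sum_univ_two, M, of_apply, cons_val', cons_val_zero, cons_val_one,
    empty_val', cons_val_fin_one, hc] at hcol₀ hcol₁ hrow₀ hrow₁
  have hx := entry_bound a 0 (by simpa using hcol₀)
  have hy := entry_bound b 0 (by rw [add_comm]; simpa using hrow₁)
  have hax := entry_bound a _ hrow₀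
  have hby := entry_bound b _ (by rwa [add_comm] at hcol₁)
  simp only [Complex.add_re, Complex.re_ofReal_mul, Complex.zero_re, mul_zero] at hax hby hx hy
  exact hαlt.not_gt <| add_mul_lt_of_mul_add_mul_lt hr hs hβ.le
    (pos_of_mul_pos_right hx hα.le) (pos_of_mul_pos_right hy hα.le) hax hby

/-- For `r, s ≥ 0` with `r + s > 0`, and `α, β > 0` with `α² + β² = 1` and
`0 < α < (r+s)β`, there are no scalars `a, b` with
`‖[[α−a, −β−ra−sb],[β, α−b]]‖ < 1` in the operator norm. -/
theorem no_close_approximant (r s α β : ℝ) (hr : 0 ≤ r) (hs : 0 ≤ s)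
    (hrs : 0 < r + s) (hαβ : α ^ 2 + β ^ 2 = 1) (hα : 0 < α)
    (hαlt : α < (r + s) * β) (a b : ℂ) :
    ¬ ‖act !![(α : ℂ) - a, -(β : ℂ) - (r : ℂ) * a - (s : ℂ) * b;
              (β : ℂ), (α : ℂ) - b]‖ < 1 :=
  no_close_approximant_general r s α β hr hs hαβ hα hαlt a b
end

section
/- For the matrix T = [[0,0,√2],[−√2,−1,0],[0,0,1]] and any α, β ∈ ℂ, the operator norm of [[α,0,√2],[−√2,β−1,0],[0,0,β+1]] is at least √3, with equality attainable at α = β = 0. -/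
open WithLp
open scoped Matrix.Norms.L2Operator

theorem norm_act {n : ℕ} (M : Matrix (Fin n) (Fin n) ℂ) : ‖act M‖ = ‖M‖ := rfl

namespace Matrix

variable {𝕜 m n : Type*} [RCLike 𝕜] [Fintype m] [Fintype n] [DecidableEq n]

theorem norm_col_le_l2_opNorm (A : Matrix m n 𝕜) (j : n) : ‖toLp 2 (A.col j)‖ ≤ ‖A‖ := by
  simpa [mulVec_single_one] using A.l2_opNorm_mulVec (EuclideanSpace.single j 1)

theorem norm_row_le_l2_opNorm [DecidableEq m] (A : Matrix m n 𝕜) (i : m) :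
    ‖toLp 2 (A.row i)‖ ≤ ‖A‖ := by
  have h := Aᴴ.norm_col_le_l2_opNorm i
  rw [l2_opNorm_conjTranspose] at h
  simpa [EuclideanSpace.norm_eq, col, row] using h

end Matrix

theorem one_le_norm_add_one_or_norm_sub_one {𝕜 : Type*} [RCLike 𝕜] (z : 𝕜) :
    1 ≤ ‖z + 1‖ ∨ 1 ≤ ‖z - 1‖ := by
  by_contra! h
  have := norm_sub_le (z + 1) (z - 1)
  rw [show z + 1 - (z - 1) = 2 by ring, RCLike.norm_two] at this
  linarith

theorem norm_smul_add_sq_le {𝕜 E : Type*} [NormedField 𝕜] [SeminormedAddCommGroup E]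
    [NormedSpace 𝕜 E] (c : 𝕜) (a b : E) :
    ‖c • a + b‖ ^ 2 ≤ (‖c‖ ^ 2 + 1) * (‖a‖ ^ 2 + ‖b‖ ^ 2) := by
  have h := norm_add_le (c • a) b
  rw [norm_smul] at h
  nlinarith [norm_nonneg (c • a + b), norm_nonneg c, norm_nonneg a, norm_nonneg b,
    sq_nonneg (‖c‖ * ‖b‖ - ‖a‖)]

theorem sqrt_three_le_l2_opNorm (α β : ℂ) :
    √3 ≤ ‖!![α, 0, (√2 : ℂ); -(√2 : ℂ), β - 1, 0; 0, 0, β + 1]‖ := by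
  have key (z : ℂ) (hz : 1 ≤ ‖z‖) : √3 ≤ √(2 + ‖z‖ ^ 2) := Real.sqrt_le_sqrt (by nlinarith)
  rcases one_le_norm_add_one_or_norm_sub_one β with h | h
  · refine (key _ h).trans (le_of_eq_of_le ?_ (Matrix.norm_col_le_l2_opNorm _ 2))
    simp [EuclideanSpace.norm_eq, Fin.sum_univ_three, Matrix.col]
  · refine (key _ h).trans (le_of_eq_of_le ?_ (Matrix.norm_row_le_l2_opNorm _ 1))
    simp [EuclideanSpace.norm_eq, Fin.sum_univ_three, Matrix.row]

theorem l2_opNorm_le_sqrt_three :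
    ‖!![(0 : ℂ), 0, (√2 : ℂ); -(√2 : ℂ), -1, 0; 0, 0, 1]‖ ≤ √3 := by
  rw [← norm_act]
  refine ContinuousLinearMap.opNorm_le_bound _ (by positivity) fun x ↦ ?_
  rw [EuclideanSpace.norm_eq, EuclideanSpace.norm_eq, ← Real.sqrt_mul (by norm_num)]
  refine Real.sqrt_le_sqrt ?_
  have h := norm_smul_add_sq_le (√2 : ℂ) (x 0) (x 1)
  simp [act, Fin.sum_univ_three, Matrix.mulVec, dotProduct] at h ⊢
  rw [← neg_add, norm_neg, mul_pow, sq_abs, Real.sq_sqrt zero_le_two]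
  linarith

/-- For any `α, β ∈ ℂ`, the operator norm of
`[[α, 0, √2], [−√2, β−1, 0], [0, 0, β+1]]` is at least `√3`, and equals `√3`
when `α = β = 0`. -/
theorem norm_T_minus_diag :
    (∀ α β : ℂ,
      Real.sqrt 3 ≤ ‖act !![α, 0, (Real.sqrt 2 : ℂ);
                            -(Real.sqrt 2 : ℂ), β - 1, 0;
                            0, 0, β + 1]‖) ∧
    ‖act !![(0 : ℂ), 0, (Real.sqrt 2 : ℂ);
            -(Real.sqrt 2 : ℂ), (0 : ℂ) - 1, 0;
            0, 0, (0 : ℂ) + 1]‖ = Real.sqrt 3 := by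
  simp only [norm_act]
  refine ⟨sqrt_three_le_l2_opNorm, le_antisymm ?_ (sqrt_three_le_l2_opNorm 0 0)⟩
  simpa only [zero_sub, zero_add] using l2_opNorm_le_sqrt_three
end

section
/- For T = [[0,0,√2],[−√2,−1,0],[0,0,1]] and unit vector v_s = (0, c, s)ᵗ with c = √(1−s²), 0 ≤ s ≤ 1, the norm ‖T v_s − ⟨T v_s, v_s⟩ v_s‖ equals √(2s² + 4s²(1−s²)), which is at most 3/2 with equality at s = √3/2. -/
/-- For `T = [[0,0,√2],[−√2,−1,0],[0,0,1]]` and the unit vector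
`v = (0, c, s)` with `c = √(1−s²)`, `0 ≤ s ≤ 1`, the norm of the component of
`T v` orthogonal to `v` equals `√(2s² + 4s²(1−s²))`, which is at most `3/2`,
with equality when `s = √3/2`. -/
theorem norm_compression_vs (s : ℝ) (h0 : 0 ≤ s) (h1 : s ≤ 1) :
    ‖act !![(0 : ℂ), 0, (Real.sqrt 2 : ℂ);
            -(Real.sqrt 2 : ℂ), -1, 0; 0, 0, 1]
        ((WithLp.equiv 2 (Fin 3 → ℂ)).symm
          ![0, (Real.sqrt (1 - s ^ 2) : ℂ), (s : ℂ)]) -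
      (inner ℂ ((WithLp.equiv 2 (Fin 3 → ℂ)).symm
          ![0, (Real.sqrt (1 - s ^ 2) : ℂ), (s : ℂ)])
        (act !![(0 : ℂ), 0, (Real.sqrt 2 : ℂ);
            -(Real.sqrt 2 : ℂ), -1, 0; 0, 0, 1]
          ((WithLp.equiv 2 (Fin 3 → ℂ)).symm
            ![0, (Real.sqrt (1 - s ^ 2) : ℂ), (s : ℂ)])) : ℂ) •
        (WithLp.equiv 2 (Fin 3 → ℂ)).symm
          ![0, (Real.sqrt (1 - s ^ 2) : ℂ), (s : ℂ)]‖
      = Real.sqrt (2 * s ^ 2 + 4 * s ^ 2 * (1 - s ^ 2)) ∧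
    Real.sqrt (2 * s ^ 2 + 4 * s ^ 2 * (1 - s ^ 2)) ≤ 3 / 2 ∧
    (s = Real.sqrt 3 / 2 →
      Real.sqrt (2 * s ^ 2 + 4 * s ^ 2 * (1 - s ^ 2)) = 3 / 2) := by
  refine ⟨?_, ?_, fun hs => ?_⟩
  · rw [EuclideanSpace.norm_eq]
    simp only [act, LinearMap.coe_toContinuousLinearMap', Matrix.toEuclideanLin_apply,
      PiLp.inner_apply, WithLp.equiv_symm_apply, PiLp.toLp_apply, WithLp.ofLp_toLp, Matrix.mulVec, dotProduct,
      Fin.sum_univ_three, PiLp.sub_apply, PiLp.smul_apply, smul_eq_mul,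
      RCLike.inner_apply, Equiv.apply_symm_apply]
    simp only [Matrix.cons_val', Matrix.cons_val_zero, Matrix.cons_val_one, Matrix.head_cons,
      Matrix.cons_val_two, Matrix.tail_cons, Matrix.empty_val', Matrix.cons_val_fin_one,
      Matrix.head_fin_const, Matrix.of_apply]
    set c := Real.sqrt (1 - s ^ 2) with hc
    simp only [Complex.conj_ofReal, mul_zero, zero_mul, mul_one, one_mul, zero_add, add_zero,
      mul_neg, neg_mul, sub_zero, map_zero, neg_zero,
      ← Complex.ofReal_mul, ← Complex.ofReal_neg, ← Complex.ofReal_add, ← Complex.ofReal_sub,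
      Complex.norm_real, Real.norm_eq_abs, sq_abs]
    have hc2 : c ^ 2 = 1 - s ^ 2 := Real.sq_sqrt (by nlinarith)
    have h2 : Real.sqrt 2 ^ 2 = 2 := Real.sq_sqrt (by norm_num)
    congr 1
    linear_combination s ^ 2 * h2 +
      ((1 + s ^ 2) ^ 2 - 2 * (1 + s ^ 2) * (c ^ 2 + 1 - s ^ 2) + c ^ 4 + c ^ 2 * (1 - s ^ 2) +
        (1 - s ^ 2) ^ 2 + s ^ 2 * (c ^ 2 + 3 * (1 - s ^ 2))) * hc2
  · have hb : 2 * s ^ 2 + 4 * s ^ 2 * (1 - s ^ 2) ≤ (3 / 2) ^ 2 := by nlinarith [sq_nonneg (2 * s ^ 2 - 3 / 2)]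
    calc Real.sqrt (2 * s ^ 2 + 4 * s ^ 2 * (1 - s ^ 2)) ≤ Real.sqrt ((3 / 2) ^ 2) :=
          Real.sqrt_le_sqrt hb
      _ = 3 / 2 := Real.sqrt_sq (by norm_num)
  · have hs2 : s ^ 2 = 3 / 4 := by
      rw [hs, div_pow, Real.sq_sqrt (by norm_num : (0:ℝ) ≤ 3)]; norm_num
    rw [hs2]
    rw [show 2 * (3 / 4 : ℝ) + 4 * (3 / 4) * (1 - 3 / 4) = (3 / 2) ^ 2 by norm_num,
      Real.sqrt_sq (by norm_num)]
end
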